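/- Let T be a bilinear form on ℝ^N whose boost order with respect to a null frame is at most zero, i.e. all components of positive boost weight vanish: T_{00} = T_{0i} = T_{i0} = 0 for all spatial i. If T^{(2)}_{ac} T^{(2)ac} = 0 and T_{ab} T^{ba} = 0, where T^{(2)}_{ac} = T_{ab} T_c{}^{b} and indices are raised with η, then all boost-weight-zero components vanish as well: T_{01} = T_{10} = 0 and T_{ij} = 0 for all spatial i, j; that is, T has negative boost order along ℓ. -/

import Mathlib

open Matrix

/-! Null-frame formalism: we work with the components of tensors with respect to a
null frame `e_0 = ℓ, e_1 = n, e_2 = m_2, …, e_{N−1} = m_{N−1}` for the Minkowski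
form `η` on `ℝ^N` (so `η(ℓ,n) = 1`, `η(m_i,m_j) = δ_{ij}`, all other frame products
vanish).  `ηnf N` is the matrix of frame components `η_{AB}`, and `ηup N = (ηnf N)⁻¹`
is the matrix of the inverse-metric components `η^{AB}` used to raise indices.
Spatial indices are those `i : Fin N` with `2 ≤ i`. -/

/-- Frame components `η_{AB}` of the Minkowski form in a null frame. -/
def ηnf (N : ℕ) : Matrix (Fin N) (Fin N) ℝ :=
  Matrix.of fun A B =>
    if ((A : ℕ) = 0 ∧ (B : ℕ) = 1) ∨ ((A : ℕ) = 1 ∧ (B : ℕ) = 0) then 1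
    else if A = B ∧ 2 ≤ (A : ℕ) then 1 else 0

/-- Components `η^{AB}` of the inverse metric in a null frame. -/
noncomputable def ηup (N : ℕ) : Matrix (Fin N) (Fin N) ℝ := (ηnf N)⁻¹

/-- The boost weight of a null-frame index: `+1` for the index `0` (the `ℓ` slot),
`−1` for the index `1` (the `n` slot), `0` for spatial indices. -/
def bw {N : ℕ} (A : Fin N) : ℤ :=
  if (A : ℕ) = 0 then 1 else if (A : ℕ) = 1 then -1 else 0


/-- The square of a rank-2 tensor with one index raised:
`T⁽²⁾_{ac} = T_{ab} T_c{}^b = T_{ab} η^{bb'} T_{cb'}`. -/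
noncomputable def sq2 (N : ℕ) (T : Fin N → Fin N → ℝ) : Fin N → Fin N → ℝ :=
  fun a c => ∑ b, ∑ b', T a b * ηup N b b' * T c b'

/-! In a null frame the metric is the permutation matrix of the transposition `σ = (0 1)`, so
both invariants are sums of products `T_{ab} T_{σb σa}`. For a tensor of boost order at most
zero such a product vanishes unless `(a, b)` is `(0, 1)`, `(1, 0)` or spatial, where it is
`T_{01}²`, `T_{10}²` or `T_{ij} T_{ji}`. The square `T⁽²⁾` again has boost order at most zero and
is symmetric, so `T⁽²⁾_{ac} T⁽²⁾ᵃᶜ = 0` forces `T⁽²⁾_{ii} = ∑_j T_{ij}² = 0` (as `T_{i0} = 0`),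
which kills the spatial block; then `T_{ab} Tᵇᵃ = T_{01}² + T_{10}² = 0`. -/

open Equiv

section NullPair

variable {ι : Type*} {o n : ι}

/-- `o` and `n` index the frame vectors `ℓ` and `n`. With `η` the permutation matrix of
`swap o n`, raising an index is precomposition with that swap. -/
def HasNonposBoostOrder (o n : ι) (U : ι → ι → ℝ) : Prop :=
  (∀ b, b ≠ n → U o b = 0) ∧ ∀ a, a ≠ n → U a o = 0

def frameSq [Fintype ι] [DecidableEq ι] (o n : ι) (T : ι → ι → ℝ) (a c : ι) : ℝ :=
  ∑ b, T a b * T c (swap o n b)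

theorem frameSq_comm [Fintype ι] [DecidableEq ι] (T : ι → ι → ℝ) (a c : ι) :
    frameSq o n T a c = frameSq o n T c a := by
  unfold frameSq
  rw [← Equiv.sum_comp (swap o n)]
  simp only [swap_apply_self, mul_comm]

theorem hasNonposBoostOrder_frameSq [Fintype ι] [DecidableEq ι] {T : ι → ι → ℝ}
    (hT : HasNonposBoostOrder o n T) :
    HasNonposBoostOrder o n (frameSq o n T) := by
  have hrow : ∀ c, c ≠ n → frameSq o n T o c = 0 := fun c hc =>
    Finset.sum_eq_zero fun b _ => by
      obtain rfl | hb := eq_or_ne b n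
      · rw [swap_apply_right, hT.2 c hc, mul_zero]
      · rw [hT.1 b hb, zero_mul]
  exact ⟨hrow, fun a ha => frameSq_comm T a o ▸ hrow a ha⟩

theorem HasNonposBoostOrder.mul_swap_nonneg [DecidableEq ι] {U : ι → ι → ℝ}
    (hU : HasNonposBoostOrder o n U)
    (hsp : ∀ a b, a ≠ o → a ≠ n → b ≠ o → b ≠ n → 0 ≤ U a b * U b a) (a b : ι) :
    0 ≤ U a b * U (swap o n b) (swap o n a) := by
  obtain ⟨hrow, hcol⟩ := hU
  by_cases hao : a = o
  · subst hao
    by_cases hbn : b = n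
    · subst hbn; rw [swap_apply_left, swap_apply_right]; exact mul_self_nonneg _
    · rw [hrow b hbn, zero_mul]
  by_cases han : a = n
  · subst han
    by_cases hbo : b = o
    · subst hbo; rw [swap_apply_left, swap_apply_right]; exact mul_self_nonneg _
    · have : swap o a b ≠ a := by rwa [Ne, swap_apply_eq_iff, swap_apply_right]
      rw [swap_apply_right, hcol _ this, mul_zero]
  rw [swap_apply_of_ne_of_ne hao han]
  by_cases hbo : b = o
  · subst hbo; rw [hcol a han, zero_mul]
  by_cases hbn : b = n
  · subst hbn; rw [swap_apply_right, hrow a han, mul_zero]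
  rw [swap_apply_of_ne_of_ne hbo hbn]
  exact hsp a b hao han hbo hbn

theorem HasNonposBoostOrder.eq_zero_of_sum_mul_swap_eq_zero [Fintype ι] [DecidableEq ι]
    {U : ι → ι → ℝ} (hU : HasNonposBoostOrder o n U)
    (hsp : ∀ a b, a ≠ o → a ≠ n → b ≠ o → b ≠ n → 0 ≤ U a b * U b a)
    (hsum : ∑ a, ∑ b, U a b * U (swap o n b) (swap o n a) = 0) :
    U o n = 0 ∧ U n o = 0 ∧ ∀ a b, a ≠ o → a ≠ n → b ≠ o → b ≠ n → U a b * U b a = 0 := by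
  have hterm : ∀ a b, U a b * U (swap o n b) (swap o n a) = 0 := by
    rw [← Fintype.sum_prod_type', Fintype.sum_eq_zero_iff_of_nonneg
      (fun p => hU.mul_swap_nonneg hsp p.1 p.2)] at hsum
    exact fun a b => congrFun hsum (a, b)
  refine ⟨?_, ?_, fun a b hao han hbo hbn => ?_⟩
  · simpa using hterm o n
  · simpa using hterm n o
  · simpa [swap_apply_of_ne_of_ne, *] using hterm a b

theorem apply_eq_zero_of_sum_mul_swap_eq_zero [Fintype ι] [DecidableEq ι] {v : ι → ℝ}
    (hv : v o = 0) (hsum : ∑ b, v b * v (swap o n b) = 0) {j : ι} (hjo : j ≠ o) (hjn : j ≠ n) :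
    v j = 0 := by
  have hnonneg : ∀ b, 0 ≤ v b * v (swap o n b) := fun b => by
    by_cases hbo : b = o
    · rw [hbo, hv, zero_mul]
    by_cases hbn : b = n
    · rw [hbn, swap_apply_right, hv, mul_zero]
    rw [swap_apply_of_ne_of_ne hbo hbn]; exact mul_self_nonneg _
  have := congrFun ((Fintype.sum_eq_zero_iff_of_nonneg hnonneg).1 hsum) j
  rwa [Pi.zero_apply, swap_apply_of_ne_of_ne hjo hjn, mul_self_eq_zero] at this

theorem HasNonposBoostOrder.eq_zero_of_invariants_eq_zero [Fintype ι] [DecidableEq ι]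
    {T : ι → ι → ℝ} (hT : HasNonposBoostOrder o n T)
    (h1 : ∑ a, ∑ c, frameSq o n T a c * frameSq o n T (swap o n a) (swap o n c) = 0)
    (h2 : ∑ a, ∑ b, T a b * T (swap o n b) (swap o n a) = 0) :
    T o n = 0 ∧ T n o = 0 ∧ ∀ i j, i ≠ o → i ≠ n → j ≠ o → j ≠ n → T i j = 0 := by
  have hS := hasNonposBoostOrder_frameSq hT
  replace h1 : ∑ a, ∑ c, frameSq o n T a c * frameSq o n T (swap o n c) (swap o n a) = 0 :=
    (Finset.sum_congr rfl fun a _ => Finset.sum_congr rfl fun c _ => by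
      rw [frameSq_comm T (swap o n c)]).trans h1
  have hSdiag : ∀ i, i ≠ o → i ≠ n → frameSq o n T i i = 0 := fun i hio hin =>
    mul_self_eq_zero.1 <| (hS.eq_zero_of_sum_mul_swap_eq_zero
      (fun a b _ _ _ _ => frameSq_comm T b a ▸ mul_self_nonneg _) h1).2.2 i i hio hin hio hin
  have hspatial : ∀ i j, i ≠ o → i ≠ n → j ≠ o → j ≠ n → T i j = 0 := fun i j hio hin =>
    apply_eq_zero_of_sum_mul_swap_eq_zero (hT.2 i hin) (hSdiag i hio hin)
  obtain ⟨hon, hno, -⟩ := hT.eq_zero_of_sum_mul_swap_eq_zero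
    (fun a b hao han hbo hbn => by rw [hspatial a b hao han hbo hbn, zero_mul]) h2
  exact ⟨hon, hno, hspatial⟩

end NullPair

section NullFrame

variable {k : ℕ}

theorem ηnf_eq_permMatrix : ηnf (k + 2) = (swap 0 1 : Perm (Fin (k + 2))).permMatrix ℝ := by
  ext A B
  simp only [ηnf, Perm.permMatrix, PEquiv.toMatrix_apply, of_apply, toPEquiv_apply,
    Option.mem_def, Option.some.injEq, swap_apply_def]
  split_ifs <;> simp only [Fin.ext_iff, Fin.val_zero, Fin.val_one] at * <;> omega

theorem ηup_eq_permMatrix : ηup (k + 2) = (swap 0 1 : Perm (Fin (k + 2))).permMatrix ℝ := by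
  rw [ηup, ηnf_eq_permMatrix]
  exact Matrix.inv_eq_right_inv <| by
    rw [← Matrix.permMatrix_mul, Equiv.swap_mul_self, Matrix.permMatrix_one]

theorem sum_ηup_mul (g : Fin (k + 2) → ℝ) (b : Fin (k + 2)) :
    ∑ b', ηup (k + 2) b b' * g b' = g (swap 0 1 b) := by
  rw [ηup_eq_permMatrix]
  exact congrFun (Matrix.permMatrix_mulVec _) b

theorem sum_ηup_ηup_mul (U V : Fin (k + 2) → Fin (k + 2) → ℝ) :
    ∑ a, ∑ c, ∑ a', ∑ c', U a c * ηup (k + 2) a a' * ηup (k + 2) c c' * V a' c' =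
      ∑ a, ∑ c, U a c * V (swap 0 1 a) (swap 0 1 c) := by
  refine Finset.sum_congr rfl fun a _ => Finset.sum_congr rfl fun c _ => ?_
  simp only [mul_assoc, ← Finset.mul_sum, sum_ηup_mul]

theorem sq2_eq_frameSq (T : Fin (k + 2) → Fin (k + 2) → ℝ) :
    sq2 (k + 2) T = frameSq 0 1 T := by
  ext a c
  simp only [sq2, frameSq, mul_assoc, ← Finset.mul_sum, sum_ηup_mul]

theorem zero_le_bw {b : Fin (k + 2)} (hb : b ≠ 1) : 0 ≤ bw b := by
  have : (b : ℕ) ≠ 1 := fun h => hb (Fin.ext (by simpa using h))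
  unfold bw; split_ifs <;> omega

theorem hasNonposBoostOrder_of_bw {T : Fin (k + 2) → Fin (k + 2) → ℝ}
    (hpos : ∀ a b, 0 < bw a + bw b → T a b = 0) : HasNonposBoostOrder 0 1 T := by
  have hbw0 : bw (0 : Fin (k + 2)) = 1 := rfl
  exact ⟨fun b hb => hpos 0 b (by linarith [zero_le_bw hb]),
    fun a ha => hpos a 0 (by linarith [zero_le_bw ha])⟩

end NullFrame

/-- **Lemma 13** (`lemmarank2`): a bilinear form `T` on `ℝ^N` of boost order at most
zero with respect to a null frame (all components of positive boost weight vanish: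
`T_{00} = T_{0i} = T_{i0} = 0`) whose scalar invariants `T⁽²⁾_{ac} T⁽²⁾ᵃᶜ` and
`T_{ab} Tᵇᵃ` both vanish has vanishing boost-weight-zero components as well:
`T_{01} = T_{10} = 0` and `T_{ij} = 0`; i.e. `T` has negative boost order along `ℓ`. -/
theorem rank2_boost_order_zero_vsi (N : ℕ) (hN : 2 ≤ N)
    (T : Fin N → Fin N → ℝ)
    (hpos : ∀ a b : Fin N, 0 < bw a + bw b → T a b = 0)
    (h1 : (∑ a, ∑ c, ∑ a', ∑ c',
      sq2 N T a c * ηup N a a' * ηup N c c' * sq2 N T a' c') = 0)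
    (h2 : (∑ a, ∑ b, ∑ a', ∑ b',
      T a b * ηup N a a' * ηup N b b' * T b' a') = 0) :
    T ⟨0, by omega⟩ ⟨1, by omega⟩ = 0 ∧ T ⟨1, by omega⟩ ⟨0, by omega⟩ = 0 ∧
    (∀ i j : Fin N, 2 ≤ (i : ℕ) → 2 ≤ (j : ℕ) → T i j = 0) := by
  obtain ⟨k, rfl⟩ := Nat.exists_eq_add_of_le' hN
  rw [sum_ηup_ηup_mul, sq2_eq_frameSq] at h1
  rw [sum_ηup_ηup_mul T (fun a' b' => T b' a')] at h2
  obtain ⟨h01, h10, hspatial⟩ :=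
    (hasNonposBoostOrder_of_bw hpos).eq_zero_of_invariants_eq_zero h1 h2
  have hne : ∀ i : Fin (k + 2), 2 ≤ (i : ℕ) → i ≠ 0 ∧ i ≠ 1 := fun i hi =>
    ⟨fun h => by simp [h] at hi, fun h => by simp [h] at hi⟩
  exact ⟨h01, h10, fun i j hi hj =>
    hspatial i j (hne i hi).1 (hne i hi).2 (hne j hj).1 (hne j hj).2⟩
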